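/- Let F ∈ 𝒜 and K ∈ 𝒜⁰ with F ∩ K ≠ K and P^j_*(K) = 0. Put I₂ := {i ∈ I : H_i ∩ F ∩ K ≠ ∅ and H_i ∩ F^c ∩ K ≠ ∅} and I₃ := {i ∈ I : H_i ∩ F ∩ K = ∅ and H_i ∩ F^c ∩ K ≠ ∅}. If I₂ ≠ ∅, I₃ = ∅, I₂ is finite, and σ(K|H_i) > 0 for every i ∈ I₂, then P_*(F|K) = min_{i∈I₂} σ(F∩K|H_i)/σ(K|H_i); in every other case P_*(F|K) = 0. -/

import Mathlib

open Set

open scoped Classical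

variable {Ω : Type*}

/-- A field of sets on `Ω`: contains `univ`, closed under complements and finite unions. -/
def IsSetField (𝒜 : Set (Set Ω)) : Prop :=
  Set.univ ∈ 𝒜 ∧ (∀ A ∈ 𝒜, Aᶜ ∈ 𝒜) ∧ ∀ A ∈ 𝒜, ∀ B ∈ 𝒜, A ∪ B ∈ 𝒜

/-- A finitely additive probability on the field `𝒜`. -/
def IsFAP (𝒜 : Set (Set Ω)) (P : Set Ω → ℝ) : Prop :=
  (∀ A ∈ 𝒜, 0 ≤ P A ∧ P A ≤ 1) ∧ P Set.univ = 1 ∧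
    ∀ A ∈ 𝒜, ∀ B ∈ 𝒜, Disjoint A B → P (A ∪ B) = P A + P B

/-- A partition of `Ω` into nonempty pairwise disjoint pieces. -/
def IsPartition {ι : Type*} (H : ι → Set Ω) : Prop :=
  (∀ i, (H i).Nonempty) ∧ (Pairwise fun i j => Disjoint (H i) (H j)) ∧
    (⋃ i, H i) = Set.univ

/-- A field containing every member of the partition `H` and whose members are
unions of members of the partition. -/
def IsFieldOver {ι : Type*} (H : ι → Set Ω) (𝒜L : Set (Set Ω)) : Prop :=
  IsSetField 𝒜L ∧ (∀ i, H i ∈ 𝒜L) ∧ ∀ A ∈ 𝒜L, ∃ S : Set ι, A = ⋃ i ∈ S, H i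

/-- A field containing `𝒜L ∪ 𝒜E` whose members are unions of the atoms `H i ∩ E j`. -/
def IsJointField {ι κ : Type*} (H : ι → Set Ω) (E : κ → Set Ω)
    (𝒜L 𝒜E 𝒜 : Set (Set Ω)) : Prop :=
  IsSetField 𝒜 ∧ 𝒜L ⊆ 𝒜 ∧ 𝒜E ⊆ 𝒜 ∧
    ∀ A ∈ 𝒜, ∃ S : Set (ι × κ), A = ⋃ p ∈ S, H p.1 ∩ E p.2

/-- A strategy on `𝒜 × ℒ`: each `σ (·|H i)` is a finitely additive probability on `𝒜`
equal to `1` on events implied by `H i`. -/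
def IsStrategy {ι : Type*} (𝒜 : Set (Set Ω)) (H : ι → Set Ω) (σ : Set Ω → ι → ℝ) : Prop :=
  ∀ i, IsFAP 𝒜 (fun F => σ F i) ∧ ∀ F ∈ 𝒜, H i ⊆ F → σ F i = 1

/-- A full conditional probability on the field `𝒜` (conditions (C1), (C2), (C3)). -/
def IsFCP (𝒜 : Set (Set Ω)) (P : Set Ω → Set Ω → ℝ) : Prop :=
  (∀ E ∈ 𝒜, ∀ K ∈ 𝒜, K.Nonempty → P E K = P (E ∩ K) K) ∧
  (∀ K ∈ 𝒜, K.Nonempty → IsFAP 𝒜 fun E => P E K) ∧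
  ∀ E ∈ 𝒜, ∀ F ∈ 𝒜, ∀ K ∈ 𝒜, K.Nonempty → (E ∩ K).Nonempty →
    P (E ∩ F) K = P E K * P F (E ∩ K)

/-- `P` extends the prior `π` on `𝒜L` and the strategy `σ` on `𝒜 × ℒ`. -/
def ExtendsPriorStrategy {ι : Type*} (𝒜 𝒜L : Set (Set Ω)) (H : ι → Set Ω)
    (π : Set Ω → ℝ) (σ : Set Ω → ι → ℝ) (P : Set Ω → Set Ω → ℝ) : Prop :=
  (∀ B ∈ 𝒜L, P B Set.univ = π B) ∧ ∀ F ∈ 𝒜, ∀ i, P F (H i) = σ F i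

/-- The set `𝒫` of full conditional probabilities on `𝒜` extending `{π, σ}`. -/
def FCPSet {ι : Type*} (𝒜 𝒜L : Set (Set Ω)) (H : ι → Set Ω)
    (π : Set Ω → ℝ) (σ : Set Ω → ι → ℝ) : Set (Set Ω → Set Ω → ℝ) :=
  {P | IsFCP 𝒜 P ∧ ExtendsPriorStrategy 𝒜 𝒜L H π σ P}

/-- Lower envelope of a set of conditional probabilities at `F|K`. -/
noncomputable def lowEnv (Ps : Set (Set Ω → Set Ω → ℝ)) (F K : Set Ω) : ℝ :=
  sInf ((fun P => P F K) '' Ps)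

/-- Upper envelope of a set of conditional probabilities at `F|K`. -/
noncomputable def upEnv (Ps : Set (Set Ω → Set Ω → ℝ)) (F K : Set Ω) : ℝ :=
  sSup ((fun P => P F K) '' Ps)

/-- A finite partition of `Ω` contained in `𝒜L`. -/
def IsFinPart (𝒜L : Set (Set Ω)) (T : Finset (Set Ω)) : Prop :=
  (↑T : Set (Set Ω)) ⊆ 𝒜L ∧ (∀ A ∈ T, (A : Set Ω).Nonempty) ∧
    (∀ A ∈ T, ∀ B ∈ T, A ≠ B → Disjoint A B) ∧ ⋃₀ (↑T : Set (Set Ω)) = Set.univ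

/-- Lower Stieltjes integral of `X : ℒ → ℝ` with respect to `μ` on `𝒜L`. -/
noncomputable def lowerSInt {ι : Type*} (H : ι → Set Ω) (𝒜L : Set (Set Ω))
    (X : ι → ℝ) (μ : Set Ω → ℝ) : ℝ :=
  sSup {x | ∃ T : Finset (Set Ω), IsFinPart 𝒜L T ∧
    x = ∑ A ∈ T, sInf {y | ∃ i, H i ⊆ A ∧ y = X i} * μ A}

/-- Upper Stieltjes integral of `X : ℒ → ℝ` with respect to `μ` on `𝒜L`. -/
noncomputable def upperSInt {ι : Type*} (H : ι → Set Ω) (𝒜L : Set (Set Ω))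
    (X : ι → ℝ) (μ : Set Ω → ℝ) : ℝ :=
  sInf {x | ∃ T : Finset (Set Ω), IsFinPart 𝒜L T ∧
    x = ∑ A ∈ T, sSup {y | ∃ i, H i ⊆ A ∧ y = X i} * μ A}

/-- `𝒜L`-continuity of a bounded function `X : ℒ → ℝ`. -/
def ALContinuous {ι : Type*} (H : ι → Set Ω) (𝒜L : Set (Set Ω)) (X : ι → ℝ) : Prop :=
  (∃ M : ℝ, ∀ i, |X i| ≤ M) ∧ ∀ t : ℝ, ∀ ε > (0 : ℝ), ∃ A ∈ 𝒜L,
    (⋃ i ∈ {i | t + ε ≤ X i}, H i) ⊆ A ∧ A ⊆ ⋃ i ∈ {i | t ≤ X i}, H i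

/-- Countable additivity of `P` on the field `𝒜`. -/
def CountablyAdditiveOn (𝒜 : Set (Set Ω)) (P : Set Ω → ℝ) : Prop :=
  ∀ A : ℕ → Set Ω, (∀ n, A n ∈ 𝒜) → (Pairwise fun m n => Disjoint (A m) (A n)) →
    (⋃ n, A n) ∈ 𝒜 → HasSum (fun n => P (A n)) (P (⋃ n, A n))

/-- A (normalized) capacity on the field `𝒜`. -/
def IsCapacity (𝒜 : Set (Set Ω)) (φ : Set Ω → ℝ) : Prop :=
  φ ∅ = 0 ∧ φ Set.univ = 1 ∧ (∀ A ∈ 𝒜, 0 ≤ φ A ∧ φ A ≤ 1) ∧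
    ∀ A ∈ 𝒜, ∀ B ∈ 𝒜, A ⊆ B → φ A ≤ φ B

/-- Total monotonicity of a capacity `φ` on the field `𝒜`. -/
def TotallyMonotone (𝒜 : Set (Set Ω)) (φ : Set Ω → ℝ) : Prop :=
  ∀ n : ℕ, 2 ≤ n → ∀ A : Fin n → Set Ω, (∀ i, A i ∈ 𝒜) →
    ∑ s ∈ Finset.univ.powerset.filter (fun s : Finset (Fin n) => s.Nonempty),
      (-1 : ℝ) ^ (s.card - 1) * φ (⋂ i ∈ s, A i) ≤ φ (⋃ i, A i)

/-- Restriction of a conditional probability to the domain `𝒜 × ℬ⁰`, viewed as a point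
of the product space `ℝ^(𝒜 × ℬ⁰)`. -/
def restrictPairs (𝒜 ℬ : Set (Set Ω)) (Q : Set Ω → Set Ω → ℝ)
    (p : {p : Set Ω × Set Ω // p.1 ∈ 𝒜 ∧ p.2 ∈ ℬ ∧ p.2.Nonempty}) : ℝ :=
  Q p.val.1 p.val.2

/-- Restriction of a set function to the domain `𝒜`, viewed as a point of `ℝ^𝒜`. -/
def restrictDom (𝒜 : Set (Set Ω)) (μ : Set Ω → ℝ) (A : {A : Set Ω // A ∈ 𝒜}) : ℝ :=
  μ A.val

/-- The field of all unions of members of the partition `H`, i.e. `⟨ℒ⟩*`. -/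
def unionsOf {ι : Type*} (H : ι → Set Ω) : Set (Set Ω) :=
  {A | ∃ S : Set ι, A = ⋃ i ∈ S, H i}

/-- The set `𝒬^fd` of fully ℒ-disintegrable full conditional probabilities on `𝒜`
extending `{π, σ}`. -/
def QfdSet {ι : Type*} (𝒜 𝒜L : Set (Set Ω)) (H : ι → Set Ω)
    (π : Set Ω → ℝ) (σ : Set Ω → ι → ℝ) : Set (Set Ω → Set Ω → ℝ) :=
  {Q | IsFCP 𝒜 Q ∧ ExtendsPriorStrategy 𝒜 𝒜L H π σ Q ∧
    ∀ F ∈ 𝒜, ∀ K ∈ 𝒜L, K.Nonempty →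
      Q F K = lowerSInt H 𝒜L (fun i => σ F i) fun B => Q B K}

/-- The set `𝒬^fsc` of fully strongly ℒ-conglomerable full conditional probabilities
on `𝒜` extending `{π, σ}`. -/
def QfscSet {ι : Type*} (𝒜 𝒜L : Set (Set Ω)) (H : ι → Set Ω)
    (π : Set Ω → ℝ) (σ : Set Ω → ι → ℝ) : Set (Set Ω → Set Ω → ℝ) :=
  {Q | IsFCP 𝒜 Q ∧ ExtendsPriorStrategy 𝒜 𝒜L H π σ Q ∧
    ∀ F ∈ 𝒜, ∀ K ∈ 𝒜L, K.Nonempty → ∀ B ∈ 𝒜L, B.Nonempty → B ⊆ K →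
      Q B K * sInf {x | ∃ i, H i ⊆ B ∧ x = σ F i} ≤ Q (F ∩ B) K ∧
      Q (F ∩ B) K ≤ Q B K * sSup {x | ∃ i, H i ⊆ B ∧ x = σ F i}}

/-- The set `𝒫^sc` of strongly ℒ-conglomerable joint probabilities consistent with `{π, σ}`. -/
def PscSet {ι : Type*} (𝒜 𝒜L : Set (Set Ω)) (H : ι → Set Ω)
    (π : Set Ω → ℝ) (σ : Set Ω → ι → ℝ) : Set (Set Ω → ℝ) :=
  {μ | (∃ P ∈ FCPSet 𝒜 𝒜L H π σ, μ = fun F => P F Set.univ) ∧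
    ∀ F ∈ 𝒜, ∀ B ∈ 𝒜L, B.Nonempty →
      π B * sInf {x | ∃ i, H i ⊆ B ∧ x = σ F i} ≤ μ (F ∩ B) ∧
      μ (F ∩ B) ≤ π B * sSup {x | ∃ i, H i ⊆ B ∧ x = σ F i}}

/-- The set `𝒫^fd` of fully ℒ-disintegrable conditional probabilities on `𝒜 × 𝒜L⁰`
extending `{π, σ}`. -/
def PfdSet {ι : Type*} (𝒜 𝒜L : Set (Set Ω)) (H : ι → Set Ω)
    (π : Set Ω → ℝ) (σ : Set Ω → ι → ℝ) : Set (Set Ω → Set Ω → ℝ) :=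
  {P | (∀ E ∈ 𝒜, ∀ K ∈ 𝒜L, K.Nonempty → P E K = P (E ∩ K) K) ∧
    (∀ K ∈ 𝒜L, K.Nonempty → IsFAP 𝒜 fun E => P E K) ∧
    (∀ E ∈ 𝒜, ∀ F ∈ 𝒜, ∀ K ∈ 𝒜L, K.Nonempty → E ∩ K ∈ 𝒜L → (E ∩ K).Nonempty →
      P (E ∩ F) K = P E K * P F (E ∩ K)) ∧
    (∀ B ∈ 𝒜L, P B Set.univ = π B) ∧ (∀ F ∈ 𝒜, ∀ i, P F (H i) = σ F i) ∧
    ∀ F ∈ 𝒜, ∀ K ∈ 𝒜L, K.Nonempty →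
      P F K = lowerSInt H 𝒜L (fun i => σ F i) fun B => P B K}

/-- The Choquet integral `C∫ X dφ = ∫₀¹ φ₊((X ≥ t)) dt` of a `[0,1]`-valued `X : ℒ → ℝ`
with respect to a capacity `φ` on `𝒜L`, where `φ₊` is the inner extension of `φ`. -/
noncomputable def choquetInt {ι : Type*} (H : ι → Set Ω) (𝒜L : Set (Set Ω))
    (X : ι → ℝ) (φ : Set Ω → ℝ) : ℝ :=
  ∫ t in (0 : ℝ)..(1 : ℝ),
    sSup {y | ∃ B ∈ 𝒜L, B ⊆ (⋃ i ∈ {i | t ≤ X i}, H i) ∧ y = φ B}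


/-!
In the closed-form case every `P ∈ 𝒫` is bounded below by the chain rule: given `K`, the
finitely many cells covering `Fᶜ ∩ K` each send to `Fᶜ` at most the fraction `1 - m` of their
conditional mass, `m` being the least ratio `σ(F ∩ K|Hᵢ) / σ(K|Hᵢ)`.

For the matching upper bounds, full conditional probabilities are built lexicographically:
condition on `K` through the first finitely additive layer that charges `K`. The first layer
is a joint probability `μ` extending `π` that disintegrates through `σ` and vanishes on `K`;
it exists because `P^j_*(K) = 0` forces `π` to be null inside `K` and on the cells that `σ`
sends into `K`, so the Łoś–Marczewski extension of the diffuse part of `π` (taking the inner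
value at `K`) does the job. Below `μ` any layer compatible with `σ` on the cells may be placed:
`σ(·|Hᵢ)` realises the ratio of `Hᵢ`, a point of `Hᵢ ∩ Fᶜ ∩ K` behind `σ(·|Hᵢ)` realises `0`
when `σ(K|Hᵢ) = 0`, and an ultrafilter limit of such points realises `0` when infinitely many
cells split `K`.
-/

namespace IsSetField

variable {𝒟 : Set (Set Ω)} {A B : Set Ω}

theorem compl_mem (h : IsSetField 𝒟) (hA : A ∈ 𝒟) : Aᶜ ∈ 𝒟 := h.2.1 A hA

theorem union_mem (h : IsSetField 𝒟) (hA : A ∈ 𝒟) (hB : B ∈ 𝒟) : A ∪ B ∈ 𝒟 :=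
  h.2.2 A hA B hB

theorem empty_mem (h : IsSetField 𝒟) : ∅ ∈ 𝒟 := by
  simpa using h.compl_mem h.1

theorem inter_mem (h : IsSetField 𝒟) (hA : A ∈ 𝒟) (hB : B ∈ 𝒟) : A ∩ B ∈ 𝒟 := by
  simpa using h.compl_mem (h.union_mem (h.compl_mem hA) (h.compl_mem hB))

theorem diff_mem (h : IsSetField 𝒟) (hA : A ∈ 𝒟) (hB : B ∈ 𝒟) : A \ B ∈ 𝒟 :=
  h.inter_mem hA (h.compl_mem hB)

theorem biUnion_mem {β : Type*} (h : IsSetField 𝒟) {s : Finset β} {f : β → Set Ω}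
    (hf : ∀ b ∈ s, f b ∈ 𝒟) : (⋃ b ∈ s, f b) ∈ 𝒟 := by
  induction s using Finset.induction_on with
  | empty => simpa using h.empty_mem
  | insert a s _ ih =>
    rw [Finset.set_biUnion_insert]
    exact h.union_mem (hf a (Finset.mem_insert_self a s))
      (ih fun b hb => hf b (Finset.mem_insert_of_mem hb))

end IsSetField

def IsFAMeasure (𝒟 : Set (Set Ω)) (m : Set Ω → ℝ) : Prop :=
  (∀ A ∈ 𝒟, 0 ≤ m A) ∧ ∀ A ∈ 𝒟, ∀ B ∈ 𝒟, Disjoint A B → m (A ∪ B) = m A + m B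

namespace IsFAMeasure

variable {𝒟 : Set (Set Ω)} {m : Set Ω → ℝ} {A B : Set Ω}

theorem nonneg (hm : IsFAMeasure 𝒟 m) (hA : A ∈ 𝒟) : 0 ≤ m A := hm.1 A hA

theorem union (hm : IsFAMeasure 𝒟 m) (hA : A ∈ 𝒟) (hB : B ∈ 𝒟) (hAB : Disjoint A B) :
    m (A ∪ B) = m A + m B :=
  hm.2 A hA B hB hAB

theorem empty (h : IsSetField 𝒟) (hm : IsFAMeasure 𝒟 m) : m ∅ = 0 := by
  have := hm.union h.empty_mem h.empty_mem (disjoint_empty _)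
  simp only [union_empty] at this
  linarith

theorem eq_inter_add_diff (h : IsSetField 𝒟) (hm : IsFAMeasure 𝒟 m) (hA : A ∈ 𝒟)
    (hB : B ∈ 𝒟) : m B = m (B ∩ A) + m (B \ A) := by
  rw [← hm.union (h.inter_mem hB hA) (h.diff_mem hB hA) disjoint_sdiff_inter.symm,
    inter_union_sdiff]

theorem mono (h : IsSetField 𝒟) (hm : IsFAMeasure 𝒟 m) (hA : A ∈ 𝒟) (hB : B ∈ 𝒟)
    (hAB : A ⊆ B) : m A ≤ m B := by
  rw [hm.eq_inter_add_diff h hA hB, inter_eq_right.2 hAB]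
  linarith [hm.nonneg (h.diff_mem hB hA)]

theorem eq_zero_of_subset (h : IsSetField 𝒟) (hm : IsFAMeasure 𝒟 m) (hA : A ∈ 𝒟)
    (hB : B ∈ 𝒟) (hAB : A ⊆ B) (hB0 : m B = 0) : m A = 0 :=
  le_antisymm (hB0 ▸ hm.mono h hA hB hAB) (hm.nonneg hA)

theorem sum_biUnion {β : Type*} (h : IsSetField 𝒟) (hm : IsFAMeasure 𝒟 m) {s : Finset β}
    {f : β → Set Ω} (hf : ∀ b ∈ s, f b ∈ 𝒟) (hd : Pairwise fun a b => Disjoint (f a) (f b)) :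
    m (⋃ b ∈ s, f b) = ∑ b ∈ s, m (f b) := by
  induction s using Finset.induction_on with
  | empty => simpa using hm.empty h
  | insert a s ha ih =>
    have hs : ∀ b ∈ s, f b ∈ 𝒟 := fun b hb => hf b (Finset.mem_insert_of_mem hb)
    have hdisj : Disjoint (f a) (⋃ b ∈ s, f b) :=
      disjoint_iUnion₂_right.2 fun b hb => hd fun hab => ha (hab ▸ hb)
    rw [Finset.set_biUnion_insert, Finset.sum_insert ha,
      hm.union (hf a (Finset.mem_insert_self a s)) (h.biUnion_mem hs) hdisj, ih hs]

theorem add {m' : Set Ω → ℝ} (hm : IsFAMeasure 𝒟 m) (hm' : IsFAMeasure 𝒟 m') :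
    IsFAMeasure 𝒟 (m + m') :=
  ⟨fun A hA => add_nonneg (hm.nonneg hA) (hm'.nonneg hA), fun A hA B hB hAB => by
    simp only [Pi.add_apply, hm.union hA hB hAB, hm'.union hA hB hAB]; ring⟩

end IsFAMeasure

theorem IsFAP.isFAMeasure {𝒟 : Set (Set Ω)} {m : Set Ω → ℝ} (hm : IsFAP 𝒟 m) :
    IsFAMeasure 𝒟 m :=
  ⟨fun A hA => (hm.1 A hA).1, hm.2.2⟩

theorem IsFAP.compl {𝒟 : Set (Set Ω)} {m : Set Ω → ℝ} (h : IsSetField 𝒟) (hm : IsFAP 𝒟 m)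
    {A : Set Ω} (hA : A ∈ 𝒟) : m Aᶜ = 1 - m A := by
  have := hm.2.2 A hA Aᶜ (h.compl_mem hA) disjoint_compl_right
  rw [union_compl_self, hm.2.1] at this
  linarith

section InnerExtension

variable {𝒟 : Set (Set Ω)} {m : Set Ω → ℝ}

noncomputable def innerVal (𝒟 : Set (Set Ω)) (m : Set Ω → ℝ) (S : Set Ω) : ℝ :=
  sSup (m '' {B | B ∈ 𝒟 ∧ B ⊆ S})

noncomputable def outerVal (𝒟 : Set (Set Ω)) (m : Set Ω → ℝ) (S : Set Ω) : ℝ :=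
  sInf (m '' {B | B ∈ 𝒟 ∧ S ⊆ B})

theorem le_innerVal (h : IsSetField 𝒟) (hm : IsFAMeasure 𝒟 m) {B S : Set Ω} (hB : B ∈ 𝒟)
    (hBS : B ⊆ S) : m B ≤ innerVal 𝒟 m S :=
  le_csSup ⟨m univ, by rintro _ ⟨C, hC, rfl⟩; exact hm.mono h hC.1 h.1 (subset_univ C)⟩
    ⟨B, ⟨hB, hBS⟩, rfl⟩

theorem innerVal_le (h : IsSetField 𝒟) {S : Set Ω} {a : ℝ}
    (ha : ∀ B ∈ 𝒟, B ⊆ S → m B ≤ a) : innerVal 𝒟 m S ≤ a :=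
  csSup_le ⟨m ∅, ∅, ⟨h.empty_mem, empty_subset S⟩, rfl⟩ fun _ ⟨B, hB, hBa⟩ => hBa ▸ ha B hB.1 hB.2

theorem outerVal_le (hm : IsFAMeasure 𝒟 m) {B S : Set Ω} (hB : B ∈ 𝒟) (hSB : S ⊆ B) :
    outerVal 𝒟 m S ≤ m B :=
  csInf_le ⟨0, by rintro _ ⟨C, hC, rfl⟩; exact hm.nonneg hC.1⟩ ⟨B, ⟨hB, hSB⟩, rfl⟩

theorem le_outerVal (h : IsSetField 𝒟) {S : Set Ω} {a : ℝ}
    (ha : ∀ B ∈ 𝒟, S ⊆ B → a ≤ m B) : a ≤ outerVal 𝒟 m S :=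
  le_csInf ⟨m univ, univ, ⟨h.1, subset_univ S⟩, rfl⟩ fun _ ⟨B, hB, hBa⟩ => hBa ▸ ha B hB.1 hB.2

theorem innerVal_nonneg (h : IsSetField 𝒟) (hm : IsFAMeasure 𝒟 m) (S : Set Ω) :
    0 ≤ innerVal 𝒟 m S :=
  hm.empty h ▸ le_innerVal h hm h.empty_mem (empty_subset S)

theorem outerVal_nonneg (h : IsSetField 𝒟) (hm : IsFAMeasure 𝒟 m) (S : Set Ω) :
    0 ≤ outerVal 𝒟 m S :=
  le_outerVal h fun _ hB _ => hm.nonneg hB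

theorem outerVal_empty (h : IsSetField 𝒟) (hm : IsFAMeasure 𝒟 m) : outerVal 𝒟 m ∅ = 0 :=
  le_antisymm (hm.empty h ▸ outerVal_le hm h.empty_mem subset_rfl) (outerVal_nonneg h hm ∅)

theorem innerVal_inter_add_outerVal_diff (h : IsSetField 𝒟) (hm : IsFAMeasure 𝒟 m)
    {B : Set Ω} (hB : B ∈ 𝒟) (X : Set Ω) :
    innerVal 𝒟 m (B ∩ X) + outerVal 𝒟 m (B \ X) = m B := by
  apply le_antisymm
  · rw [← le_sub_iff_add_le]
    refine innerVal_le h fun C hC hCX => ?_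
    have hCB : C ⊆ B := hCX.trans inter_subset_left
    have hsplit := hm.eq_inter_add_diff h hC hB
    rw [inter_eq_right.2 hCB] at hsplit
    have := outerVal_le hm (h.diff_mem hB hC)
      (sdiff_subset_sdiff_right (hCX.trans inter_subset_right))
    linarith
  · rw [← sub_le_iff_le_add']
    refine le_outerVal h fun D hD hXD => ?_
    have hsplit := hm.eq_inter_add_diff h hD hB
    have h1 : m (B \ D) ≤ innerVal 𝒟 m (B ∩ X) :=
      le_innerVal h hm (h.diff_mem hB hD) fun x hx =>
        ⟨hx.1, by_contra fun hxX => hx.2 (hXD ⟨hx.1, hxX⟩)⟩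
    have h2 := hm.mono h (h.inter_mem hB hD) hD inter_subset_right
    linarith

theorem innerVal_union (h : IsSetField 𝒟) (hm : IsFAMeasure 𝒟 m) {B S T : Set Ω}
    (hB : B ∈ 𝒟) (hSB : S ⊆ B) (hTB : Disjoint T B) :
    innerVal 𝒟 m (S ∪ T) = innerVal 𝒟 m S + innerVal 𝒟 m T := by
  apply le_antisymm
  · refine innerVal_le h fun C hC hCST => ?_
    rw [hm.eq_inter_add_diff h hB hC]
    gcongr
    · refine le_innerVal h hm (h.inter_mem hC hB) fun x hx => ?_
      exact (hCST hx.1).resolve_right fun hxT => hTB.le_bot ⟨hxT, hx.2⟩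
    · refine le_innerVal h hm (h.diff_mem hC hB) fun x hx => ?_
      exact (hCST hx.1).resolve_left fun hxS => hx.2 (hSB hxS)
  · rw [← le_sub_iff_add_le]
    refine innerVal_le h fun C₁ hC₁ hC₁S => ?_
    rw [le_sub_comm]
    refine innerVal_le h fun C₂ hC₂ hC₂T => ?_
    have hd : Disjoint C₁ C₂ := (hTB.symm.mono_left hSB).mono hC₁S hC₂T
    have := le_innerVal h hm (h.union_mem hC₁ hC₂) (union_subset_union hC₁S hC₂T)
    rw [hm.union hC₁ hC₂ hd] at this
    linarith

theorem outerVal_union (h : IsSetField 𝒟) (hm : IsFAMeasure 𝒟 m) {B S T : Set Ω}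
    (hB : B ∈ 𝒟) (hSB : S ⊆ B) (hTB : Disjoint T B) :
    outerVal 𝒟 m (S ∪ T) = outerVal 𝒟 m S + outerVal 𝒟 m T := by
  apply le_antisymm
  · rw [← sub_le_iff_le_add]
    refine le_outerVal h fun D₁ hD₁ hSD₁ => ?_
    rw [sub_le_comm]
    refine le_outerVal h fun D₂ hD₂ hTD₂ => ?_
    have hcover : S ∪ T ⊆ (D₁ ∩ B) ∪ (D₂ \ B) :=
      union_subset_union (subset_inter hSD₁ hSB) (subset_sdiff.2 ⟨hTD₂, hTB⟩)
    have := outerVal_le hm (h.union_mem (h.inter_mem hD₁ hB) (h.diff_mem hD₂ hB)) hcover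
    rw [hm.union (h.inter_mem hD₁ hB) (h.diff_mem hD₂ hB)
      (disjoint_sdiff_right.mono_left inter_subset_right)] at this
    have h₁ := hm.mono h (h.inter_mem hD₁ hB) hD₁ inter_subset_left
    have h₂ := hm.mono h (h.diff_mem hD₂ hB) hD₂ sdiff_subset
    linarith
  · refine le_outerVal h fun D hD hSTD => ?_
    rw [hm.eq_inter_add_diff h hB hD]
    gcongr
    · exact outerVal_le hm (h.inter_mem hD hB) (subset_inter (subset_union_left.trans hSTD) hSB)
    · exact outerVal_le hm (h.diff_mem hD hB)
        (subset_sdiff.2 ⟨subset_union_right.trans hSTD, hTB⟩)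

def adjoinField (𝒟 : Set (Set Ω)) (X : Set Ω) : Set (Set Ω) :=
  {A | ∃ B₁ ∈ 𝒟, ∃ B₂ ∈ 𝒟, A = (B₁ ∩ X) ∪ (B₂ \ X)}

/-- The Łoś–Marczewski extension of `m` to `adjoinField 𝒟 X`. -/
noncomputable def adjoinExt (𝒟 : Set (Set Ω)) (m : Set Ω → ℝ) (X A : Set Ω) : ℝ :=
  innerVal 𝒟 m (A ∩ X) + outerVal 𝒟 m (A \ X)

theorem isSetField_adjoinField (h : IsSetField 𝒟) (X : Set Ω) :
    IsSetField (adjoinField 𝒟 X) := by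
  refine ⟨⟨univ, h.1, univ, h.1, by simp⟩, ?_, ?_⟩
  · rintro _ ⟨B₁, hB₁, B₂, hB₂, rfl⟩
    refine ⟨B₁ᶜ, h.compl_mem hB₁, B₂ᶜ, h.compl_mem hB₂, ?_⟩
    ext x
    by_cases hx : x ∈ X <;> simp [hx]
  · rintro _ ⟨B₁, hB₁, B₂, hB₂, rfl⟩ _ ⟨B₁', hB₁', B₂', hB₂', rfl⟩
    refine ⟨B₁ ∪ B₁', h.union_mem hB₁ hB₁', B₂ ∪ B₂', h.union_mem hB₂ hB₂', ?_⟩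
    ext x
    by_cases hx : x ∈ X <;> simp [hx]

theorem subset_adjoinField (X : Set Ω) : 𝒟 ⊆ adjoinField 𝒟 X :=
  fun B hB => ⟨B, hB, B, hB, (inter_union_sdiff B X).symm⟩

theorem mem_adjoinField (h : IsSetField 𝒟) (X : Set Ω) : X ∈ adjoinField 𝒟 X :=
  ⟨univ, h.1, ∅, h.empty_mem, by simp⟩

theorem adjoinExt_eq (h : IsSetField 𝒟) (hm : IsFAMeasure 𝒟 m) {B : Set Ω} (hB : B ∈ 𝒟)
    (X : Set Ω) : adjoinExt 𝒟 m X B = m B :=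
  innerVal_inter_add_outerVal_diff h hm hB X

theorem adjoinExt_self (h : IsSetField 𝒟) (hm : IsFAMeasure 𝒟 m) (X : Set Ω) :
    adjoinExt 𝒟 m X X = innerVal 𝒟 m X := by
  rw [adjoinExt, inter_self, sdiff_self, outerVal_empty h hm, add_zero]

theorem isFAMeasure_adjoinExt (h : IsSetField 𝒟) (hm : IsFAMeasure 𝒟 m) (X : Set Ω) :
    IsFAMeasure (adjoinField 𝒟 X) (adjoinExt 𝒟 m X) := by
  refine ⟨fun A _ => add_nonneg (innerVal_nonneg h hm _) (outerVal_nonneg h hm _), ?_⟩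
  rintro _ ⟨B₁, hB₁, B₂, hB₂, rfl⟩ A' - hd
  have hin : Disjoint (A' ∩ X) B₁ := by
    refine disjoint_left.2 fun x hx hxB₁ => hd.le_bot ⟨Or.inl ⟨hxB₁, hx.2⟩, hx.1⟩
  have hout : Disjoint (A' \ X) B₂ := by
    refine disjoint_left.2 fun x hx hxB₂ => hd.le_bot ⟨Or.inr ⟨hxB₂, hx.2⟩, hx.1⟩
  have e₁ : (B₁ ∩ X ∪ B₂ \ X) ∩ X = B₁ ∩ X := by ext x; by_cases hx : x ∈ X <;> simp [hx]
  have e₂ : (B₁ ∩ X ∪ B₂ \ X) \ X = B₂ \ X := by ext x; by_cases hx : x ∈ X <;> simp [hx]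
  simp only [adjoinExt, union_inter_distrib_right, union_sdiff_distrib, e₁, e₂]
  rw [innerVal_union h hm hB₁ inter_subset_left hin,
    outerVal_union h hm hB₂ sdiff_subset hout]
  ring

end InnerExtension

section Zorn

variable {ℬ 𝒞 : Set (Set Ω)} {m : Set Ω → ℝ}

structure PartialExtension (ℬ 𝒞 : Set (Set Ω)) (m : Set Ω → ℝ) where
  dom : Set (Set Ω)
  val : Set Ω → ℝ
  isSetField : IsSetField dom
  base_subset : ℬ ⊆ dom
  subset : dom ⊆ 𝒞
  isFAMeasure : IsFAMeasure dom val
  eq_on_base : ∀ A ∈ ℬ, val A = m A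

namespace PartialExtension

instance : Preorder (PartialExtension ℬ 𝒞 m) where
  le p q := p.dom ⊆ q.dom ∧ ∀ A ∈ p.dom, q.val A = p.val A
  le_refl p := ⟨subset_rfl, fun _ _ => rfl⟩
  le_trans p q r hpq hqr :=
    ⟨hpq.1.trans hqr.1, fun A hA => (hqr.2 A (hpq.1 hA)).trans (hpq.2 A hA)⟩

theorem exists_mem_dom_of_isChain {c : Set (PartialExtension ℬ 𝒞 m)} (hc : IsChain (· ≤ ·) c)
    {p q : PartialExtension ℬ 𝒞 m} (hp : p ∈ c) (hq : q ∈ c) {A B : Set Ω} (hA : A ∈ p.dom)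
    (hB : B ∈ q.dom) : ∃ r ∈ c, A ∈ r.dom ∧ B ∈ r.dom := by
  rcases hc.total hp hq with hpq | hqp
  · exact ⟨q, hq, hpq.1 hA, hB⟩
  · exact ⟨p, hp, hA, hqp.1 hB⟩

noncomputable def chainVal (c : Set (PartialExtension ℬ 𝒞 m)) (A : Set Ω) : ℝ :=
  if h : ∃ p ∈ c, A ∈ p.dom then h.choose.val A else 0

theorem chainVal_eq {c : Set (PartialExtension ℬ 𝒞 m)} (hc : IsChain (· ≤ ·) c)
    {p : PartialExtension ℬ 𝒞 m} (hp : p ∈ c) {A : Set Ω} (hA : A ∈ p.dom) :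
    chainVal c A = p.val A := by
  have h : ∃ p ∈ c, A ∈ p.dom := ⟨p, hp, hA⟩
  rw [chainVal, dif_pos h]
  rcases hc.total h.choose_spec.1 hp with hle | hle
  · exact (hle.2 A h.choose_spec.2).symm
  · exact hle.2 A hA

noncomputable def sup (c : Set (PartialExtension ℬ 𝒞 m)) (hc : IsChain (· ≤ ·) c)
    (hne : c.Nonempty) : PartialExtension ℬ 𝒞 m where
  dom := ⋃ p ∈ c, p.dom
  val := chainVal c
  isSetField := by
    refine ⟨mem_biUnion hne.some_mem hne.some.isSetField.1, ?_, ?_⟩ <;>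
      simp only [mem_iUnion₂]
    · rintro A ⟨p, hp, hA⟩
      exact ⟨p, hp, p.isSetField.compl_mem hA⟩
    · rintro A ⟨p, hp, hA⟩ B ⟨q, hq, hB⟩
      obtain ⟨r, hr, hAr, hBr⟩ := exists_mem_dom_of_isChain hc hp hq hA hB
      exact ⟨r, hr, r.isSetField.union_mem hAr hBr⟩
  base_subset A hA := mem_biUnion hne.some_mem (hne.some.base_subset hA)
  subset := iUnion₂_subset fun p _ => p.subset
  isFAMeasure := by
    refine ⟨?_, ?_⟩ <;> simp only [mem_iUnion₂]
    · rintro A ⟨p, hp, hA⟩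
      exact chainVal_eq hc hp hA ▸ p.isFAMeasure.nonneg hA
    · rintro A ⟨p, hp, hA⟩ B ⟨q, hq, hB⟩ hAB
      obtain ⟨r, hr, hAr, hBr⟩ := exists_mem_dom_of_isChain hc hp hq hA hB
      rw [chainVal_eq hc hr hAr, chainVal_eq hc hr hBr,
        chainVal_eq hc hr (r.isSetField.union_mem hAr hBr), r.isFAMeasure.union hAr hBr hAB]
  eq_on_base A hA := by
    rw [chainVal_eq hc hne.some_mem (hne.some.base_subset hA), hne.some.eq_on_base A hA]

theorem le_sup {c : Set (PartialExtension ℬ 𝒞 m)} (hc : IsChain (· ≤ ·) c)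
    (hne : c.Nonempty) {p : PartialExtension ℬ 𝒞 m} (hp : p ∈ c) : p ≤ sup c hc hne :=
  ⟨subset_biUnion_of_mem (u := fun q : PartialExtension ℬ 𝒞 m => q.dom) hp,
    fun _ hA => chainVal_eq hc hp hA⟩

def base (hℬ : IsSetField ℬ) (hsub : ℬ ⊆ 𝒞) (hm : IsFAMeasure ℬ m) :
    PartialExtension ℬ 𝒞 m :=
  ⟨ℬ, m, hℬ, subset_rfl, hsub, hm, fun _ _ => rfl⟩

noncomputable def adjoin (p : PartialExtension ℬ 𝒞 m) (h𝒞 : IsSetField 𝒞) {X : Set Ω}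
    (hX : X ∈ 𝒞) : PartialExtension ℬ 𝒞 m where
  dom := adjoinField p.dom X
  val := adjoinExt p.dom p.val X
  isSetField := isSetField_adjoinField p.isSetField X
  base_subset := p.base_subset.trans (subset_adjoinField X)
  subset := by
    rintro _ ⟨B₁, hB₁, B₂, hB₂, rfl⟩
    exact h𝒞.union_mem (h𝒞.inter_mem (p.subset hB₁) hX) (h𝒞.diff_mem (p.subset hB₂) hX)
  isFAMeasure := isFAMeasure_adjoinExt p.isSetField p.isFAMeasure X
  eq_on_base A hA := by
    rw [adjoinExt_eq p.isSetField p.isFAMeasure (p.base_subset hA), p.eq_on_base A hA]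

theorem le_adjoin (p : PartialExtension ℬ 𝒞 m) (h𝒞 : IsSetField 𝒞) {X : Set Ω} (hX : X ∈ 𝒞) :
    p ≤ p.adjoin h𝒞 hX :=
  ⟨subset_adjoinField X, fun _ hA => adjoinExt_eq p.isSetField p.isFAMeasure hA X⟩

theorem dom_eq_of_isMax (h𝒞 : IsSetField 𝒞) {p : PartialExtension ℬ 𝒞 m} (hp : IsMax p) :
    p.dom = 𝒞 := by
  refine p.subset.antisymm fun X hX => ?_
  exact (hp (p.le_adjoin h𝒞 hX)).1 (mem_adjoinField p.isSetField X)

end PartialExtension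

theorem PartialExtension.exists_le_isMax (p : PartialExtension ℬ 𝒞 m) :
    ∃ q, p ≤ q ∧ IsMax q := by
  obtain ⟨q, hpq, hq⟩ := zorn_le_nonempty₀ univ
    (fun c _ hc y hy => ⟨sup c hc ⟨y, hy⟩, mem_univ _, fun _ hz => le_sup hc ⟨y, hy⟩ hz⟩) p
    (mem_univ p)
  exact ⟨q, hpq, fun r hqr => hq.2 (mem_univ r) hqr⟩

theorem exists_extension_innerVal (h𝒞 : IsSetField 𝒞) (hℬ : IsSetField ℬ) (hsub : ℬ ⊆ 𝒞)
    (hm : IsFAMeasure ℬ m) {K : Set Ω} (hK : K ∈ 𝒞) :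
    ∃ m' : Set Ω → ℝ, IsFAMeasure 𝒞 m' ∧ (∀ A ∈ ℬ, m' A = m A) ∧ m' K = innerVal ℬ m K := by
  let p := (PartialExtension.base hℬ hsub hm).adjoin h𝒞 hK
  obtain ⟨q, hpq, hq⟩ := p.exists_le_isMax
  refine ⟨q.val, (q.dom_eq_of_isMax h𝒞 hq).subst (motive := (IsFAMeasure · q.val))
    q.isFAMeasure, q.eq_on_base, ?_⟩
  rw [hpq.2 K (mem_adjoinField hℬ K)]
  exact adjoinExt_self hℬ hm K

end Zorn

section Strategy

variable {ι : Type*} {𝒜 : Set (Set Ω)} {H : ι → Set Ω} {σ : Set Ω → ι → ℝ}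

theorem IsStrategy.isFAMeasure (hσ : IsStrategy 𝒜 H σ) (i : ι) :
    IsFAMeasure 𝒜 (σ · i) :=
  (hσ i).1.isFAMeasure

theorem IsStrategy.cell_self (hσ : IsStrategy 𝒜 H σ) {i : ι} (hHi : H i ∈ 𝒜) : σ (H i) i = 1 :=
  (hσ i).2 _ hHi subset_rfl

theorem IsStrategy.eq_zero_of_disjoint (h𝒜 : IsSetField 𝒜) (hσ : IsStrategy 𝒜 H σ)
    {A : Set Ω} {i : ι} (hA : A ∈ 𝒜) (hd : Disjoint A (H i)) : σ A i = 0 := by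
  have hcompl := (hσ i).2 Aᶜ (h𝒜.compl_mem hA) (subset_compl_comm.1 hd.subset_compl_right)
  have hsum := (hσ i).1.2.2 A hA Aᶜ (h𝒜.compl_mem hA) disjoint_compl_right
  simp only [union_compl_self, (hσ i).1.2.1, hcompl] at hsum
  linarith

theorem IsStrategy.inter_cell (h𝒜 : IsSetField 𝒜) (hσ : IsStrategy 𝒜 H σ) {A : Set Ω} {i : ι}
    (hA : A ∈ 𝒜) (hHi : H i ∈ 𝒜) : σ (A ∩ H i) i = σ A i := by
  rw [(hσ.isFAMeasure i).eq_inter_add_diff h𝒜 hHi hA,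
    hσ.eq_zero_of_disjoint h𝒜 (h𝒜.diff_mem hA hHi) disjoint_sdiff_left, add_zero]

end Strategy

section Layers

variable {𝒜 : Set (Set Ω)} {ν : Set Ω → ℝ} {E F K : Set Ω}

theorem isFAP_div (h𝒜 : IsSetField 𝒜) (hν : IsFAMeasure 𝒜 ν) (hK : K ∈ 𝒜) (hpos : 0 < ν K) :
    IsFAP 𝒜 fun F => ν (F ∩ K) / ν K := by
  refine ⟨fun A hA => ⟨div_nonneg (hν.nonneg (h𝒜.inter_mem hA hK)) hpos.le, ?_⟩, ?_, ?_⟩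
  · exact (div_le_one hpos).2 (hν.mono h𝒜 (h𝒜.inter_mem hA hK) hK inter_subset_right)
  · simp only [univ_inter, div_self hpos.ne']
  · intro A hA B hB hAB
    dsimp only
    rw [union_inter_distrib_right, hν.union (h𝒜.inter_mem hA hK) (h𝒜.inter_mem hB hK)
      (hAB.mono inter_subset_left inter_subset_left), add_div]

/-- (C3) for the ratios of `ν`; the conditional `R` at `E ∩ K` is only pinned down when `ν`
charges `E ∩ K`. -/
theorem div_inter_eq_mul (h𝒜 : IsSetField 𝒜) (hν : IsFAMeasure 𝒜 ν) (hE : E ∈ 𝒜) (hF : F ∈ 𝒜)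
    (hK : K ∈ 𝒜) {R : ℝ} (hR : 0 < ν (E ∩ K) → R = ν (F ∩ (E ∩ K)) / ν (E ∩ K)) :
    ν (E ∩ F ∩ K) / ν K = ν (E ∩ K) / ν K * R := by
  have hEFK : E ∩ F ∩ K = F ∩ (E ∩ K) := by rw [inter_comm E F, inter_assoc]
  rcases (hν.nonneg (h𝒜.inter_mem hE hK)).lt_or_eq with hpos | hzero
  · rw [hR hpos, hEFK]
    field_simp
  · rw [← hzero, hν.eq_zero_of_subset h𝒜 (h𝒜.inter_mem (h𝒜.inter_mem hE hF) hK)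
      (h𝒜.inter_mem hE hK) (inter_subset_inter_left K inter_subset_left) hzero.symm]
    simp

noncomputable def overlay (ν : Set Ω → ℝ) (Q : Set Ω → Set Ω → ℝ) (F K : Set Ω) : ℝ :=
  if 0 < ν K then ν (F ∩ K) / ν K else Q F K

theorem overlay_of_pos {Q : Set Ω → Set Ω → ℝ} (h : 0 < ν K) (F : Set Ω) :
    overlay ν Q F K = ν (F ∩ K) / ν K :=
  if_pos h

theorem overlay_of_not_pos {Q : Set Ω → Set Ω → ℝ} (h : ¬0 < ν K) (F : Set Ω) :
    overlay ν Q F K = Q F K :=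
  if_neg h

theorem isFCP_overlay (h𝒜 : IsSetField 𝒜) (hν : IsFAMeasure 𝒜 ν) {Q : Set Ω → Set Ω → ℝ}
    (hQ : IsFCP 𝒜 Q) : IsFCP 𝒜 (overlay ν Q) := by
  refine ⟨fun E hE K hK hKne => ?_, fun K hK hKne => ?_, fun E hE F hF K hK hKne hEKne => ?_⟩
  · by_cases hpos : 0 < ν K
    · simp only [overlay_of_pos hpos, inter_assoc, inter_self]
    · simp only [overlay_of_not_pos hpos, hQ.1 E hE K hK hKne]
  · by_cases hpos : 0 < ν K
    · simpa only [overlay_of_pos hpos] using isFAP_div h𝒜 hν hK hpos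
    · simpa only [overlay_of_not_pos hpos] using hQ.2.1 K hK hKne
  · by_cases hpos : 0 < ν K
    · simp only [overlay_of_pos hpos]
      exact div_inter_eq_mul h𝒜 hν hE hF hK fun h => overlay_of_pos h F
    · have hEpos : ¬0 < ν (E ∩ K) := fun h =>
        hpos (h.trans_le (hν.mono h𝒜 (h𝒜.inter_mem hE hK) hK inter_subset_right))
      simp only [overlay_of_not_pos hpos, overlay_of_not_pos hEpos]
      exact hQ.2.2 E hE F hF K hK hKne hEKne

end Layers

section Lex

variable {β : Type*} (r : β → β → Prop) [IsWellOrder β r] {𝒜 : Set (Set Ω)}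
  {ν : β → Set Ω → ℝ} {K : Set Ω}

noncomputable def lexCond (ν : β → Set Ω → ℝ) (F K : Set Ω) : ℝ :=
  if h : ∃ b, 0 < ν b K then
    let b := (IsWellFounded.wf : WellFounded r).min {b | 0 < ν b K} h
    ν b (F ∩ K) / ν b K
  else 0

theorem lexCond_eq {b : β} (hb : 0 < ν b K) (hfirst : ∀ b', r b' b → ν b' K ≤ 0) (F : Set Ω) :
    lexCond r ν F K = ν b (F ∩ K) / ν b K := by
  have h : ∃ b, 0 < ν b K := ⟨b, hb⟩
  have hmin : (IsWellFounded.wf : WellFounded r).min {b | 0 < ν b K} h = b := by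
    rcases trichotomous_of r ((IsWellFounded.wf : WellFounded r).min _ h) b with hlt | heq | hgt
    · exact absurd (IsWellFounded.wf.min_mem _ h) (hfirst _ hlt).not_gt
    · exact heq
    · exact absurd hgt ((IsWellFounded.wf : WellFounded r).not_lt_min _ hb)
  rw [lexCond, dif_pos h]
  simp only [hmin]

theorem exists_lexCond_eq (h : ∃ b, 0 < ν b K) :
    ∃ b, 0 < ν b K ∧ (∀ b', r b' b → ν b' K ≤ 0) ∧
      ∀ F, lexCond r ν F K = ν b (F ∩ K) / ν b K := by
  let b := (IsWellFounded.wf : WellFounded r).min {b | 0 < ν b K} h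
  have hfirst : ∀ b', r b' b → ν b' K ≤ 0 := fun b' hb' =>
    not_lt.1 fun hpos => (IsWellFounded.wf : WellFounded r).not_lt_min _ hpos hb'
  have hb : 0 < ν b K := IsWellFounded.wf.min_mem _ h
  exact ⟨b, hb, hfirst, lexCond_eq r hb hfirst⟩

theorem isFCP_lexCond (h𝒜 : IsSetField 𝒜) (hν : ∀ b, IsFAMeasure 𝒜 (ν b))
    (hcover : ∀ K ∈ 𝒜, K.Nonempty → ∃ b, 0 < ν b K) : IsFCP 𝒜 (lexCond r ν) := by
  refine ⟨fun E _ K hK hKne => ?_, fun K hK hKne => ?_, fun E hE F hF K hK hKne _ => ?_⟩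
  all_goals obtain ⟨b, hb, hfirst, hval⟩ := exists_lexCond_eq r (hcover K hK hKne)
  · simp only [hval, inter_assoc, inter_self]
  · simpa only [hval] using isFAP_div h𝒜 (hν b) hK hb
  · simp only [hval]
    refine div_inter_eq_mul h𝒜 (hν b) hE hF hK fun hpos => lexCond_eq r hpos (fun b' hb' => ?_) F
    exact ((hν b').mono h𝒜 (h𝒜.inter_mem hE hK) hK inter_subset_right).trans (hfirst b' hb')

end Lex

noncomputable def ultrafilterMass (V : Ultrafilter Ω) (A : Set Ω) : ℝ :=
  if A ∈ V then 1 else 0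

theorem isFAMeasure_ultrafilterMass (𝒟 : Set (Set Ω)) (V : Ultrafilter Ω) :
    IsFAMeasure 𝒟 (ultrafilterMass V) := by
  refine ⟨fun A _ => by unfold ultrafilterMass; split_ifs <;> norm_num, fun A _ B _ hAB => ?_⟩
  have hnot : ¬(A ∈ V ∧ B ∈ V) := fun h => by
    simpa [hAB.inter_eq] using V.inter_mem h.1 h.2
  unfold ultrafilterMass
  by_cases hA : A ∈ V <;> by_cases hB : B ∈ V <;> simp_all [Ultrafilter.union_mem_iff]

section StrategyFCP

variable {ι : Type*} {𝒜 𝒜L : Set (Set Ω)} {H : ι → Set Ω} {π : Set Ω → ℝ}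
  {σ : Set Ω → ι → ℝ}

/-- Conditioning first through the strategy, then on single points. -/
theorem exists_isFCP_eq_strategy (h𝒜 : IsSetField 𝒜) (hHmem : ∀ i, H i ∈ 𝒜)
    (hHd : Pairwise fun i j => Disjoint (H i) (H j)) (hσ : IsStrategy 𝒜 H σ) :
    ∃ Q, IsFCP 𝒜 Q ∧ ∀ F ∈ 𝒜, ∀ j, Q F (H j) = σ F j := by
  let ν : ι ⊕ Ω → Set Ω → ℝ := Sum.elim (fun i A => σ A i) fun ω => ultrafilterMass (pure ω)
  let r := Sum.Lex (@WellOrderingRel ι) (@WellOrderingRel Ω)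
  refine ⟨lexCond r ν, isFCP_lexCond r h𝒜 ?_ ?_, fun F hF j => ?_⟩
  · rintro (i | ω)
    exacts [hσ.isFAMeasure i, isFAMeasure_ultrafilterMass 𝒜 _]
  · rintro K - ⟨ω, hω⟩
    exact ⟨Sum.inr ω, by simp [ν, ultrafilterMass, hω]⟩
  · have hfirst : ∀ b, r b (Sum.inl j) → ν b (H j) ≤ 0 := by
      rintro (i | ω) hb
      · have hij : i ≠ j := by
          rintro rfl
          exact irrefl_of WellOrderingRel i (by simpa [r] using hb)
        exact (hσ.eq_zero_of_disjoint h𝒜 (hHmem j) (hHd hij.symm)).le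
      · simp [r] at hb
    rw [lexCond_eq r (b := Sum.inl j) (by simp [ν, hσ.cell_self (hHmem j)]) hfirst F]
    simp [ν, hσ.inter_cell h𝒜 hF (hHmem j), hσ.cell_self (hHmem j)]

end StrategyFCP

section Disintegration

variable {ι : Type*} {𝒜 𝒜L : Set (Set Ω)} {H : ι → Set Ω} {π : Set Ω → ℝ}
  {σ : Set Ω → ι → ℝ}

theorem IsFieldOver.subset_or_disjoint (hHd : Pairwise fun i j => Disjoint (H i) (H j))
    (h𝒜L : IsFieldOver H 𝒜L) {B : Set Ω} (hB : B ∈ 𝒜L) (i : ι) :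
    H i ⊆ B ∨ Disjoint (H i) B := by
  obtain ⟨S, rfl⟩ := h𝒜L.2.2 B hB
  by_cases hi : i ∈ S
  · exact Or.inl (subset_biUnion_of_mem (u := H) hi)
  · exact Or.inr (disjoint_iUnion₂_right.2 fun j hj => hHd fun hij => hi (hij ▸ hj))

theorem pi_mul_strategy_eq (h𝒜 : IsSetField 𝒜) (hHd : Pairwise fun i j => Disjoint (H i) (H j))
    (h𝒜L : IsFieldOver H 𝒜L) (hsubL : 𝒜L ⊆ 𝒜) (hπ : IsFAP 𝒜L π) (hσ : IsStrategy 𝒜 H σ)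
    {B : Set Ω} (hB : B ∈ 𝒜L) (i : ι) : π (H i) * σ B i = π (H i ∩ B) := by
  rcases h𝒜L.subset_or_disjoint hHd hB i with hsub | hd
  · rw [(hσ i).2 B (hsubL hB) hsub, mul_one, inter_eq_left.2 hsub]
  · rw [hσ.eq_zero_of_disjoint h𝒜 (hsubL hB) hd.symm, mul_zero, hd.inter_eq,
      hπ.isFAMeasure.empty h𝒜L.1]

noncomputable def atomicPart (H : ι → Set Ω) (π : Set Ω → ℝ) (σ : Set Ω → ι → ℝ)
    (A : Set Ω) : ℝ :=
  ∑' i, π (H i) * σ A i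

section AtomicPart

variable (h𝒜 : IsSetField 𝒜) (hHd : Pairwise fun i j => Disjoint (H i) (H j))
  (h𝒜L : IsFieldOver H 𝒜L) (hπ : IsFAP 𝒜L π) (hσ : IsStrategy 𝒜 H σ)

include hHd h𝒜L hπ hσ in
theorem summable_atomicPart {A : Set Ω} (hA : A ∈ 𝒜) :
    Summable fun i => π (H i) * σ A i := by
  have hnonneg : ∀ i, 0 ≤ π (H i) * σ A i := fun i =>
    mul_nonneg (hπ.1 _ (h𝒜L.2.1 i)).1 ((hσ i).1.1 A hA).1
  refine summable_of_sum_le (c := 1) hnonneg fun u => ?_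
  calc ∑ i ∈ u, π (H i) * σ A i ≤ ∑ i ∈ u, π (H i) :=
        Finset.sum_le_sum fun i _ => mul_le_of_le_one_right (hπ.1 _ (h𝒜L.2.1 i)).1
          ((hσ i).1.1 A hA).2
    _ = π (⋃ i ∈ u, H i) :=
        (hπ.isFAMeasure.sum_biUnion h𝒜L.1 (fun i _ => h𝒜L.2.1 i) hHd).symm
    _ ≤ 1 := (hπ.1 _ (h𝒜L.1.biUnion_mem fun i _ => h𝒜L.2.1 i)).2

include hHd h𝒜L hπ hσ in
theorem isFAMeasure_atomicPart : IsFAMeasure 𝒜 (atomicPart H π σ) := by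
  refine ⟨fun A hA => tsum_nonneg fun i =>
    mul_nonneg (hπ.1 _ (h𝒜L.2.1 i)).1 ((hσ i).1.1 A hA).1, fun A hA B hB hAB => ?_⟩
  simp only [atomicPart, (hσ _).1.2.2 A hA B hB hAB, mul_add]
  exact (summable_atomicPart hHd h𝒜L hπ hσ hA).tsum_add
    (summable_atomicPart hHd h𝒜L hπ hσ hB)

include h𝒜 hHd hσ in
theorem atomicPart_inter_cell (hHmem : ∀ i, H i ∈ 𝒜) {A : Set Ω} (hA : A ∈ 𝒜) (i : ι) :
    atomicPart H π σ (A ∩ H i) = π (H i) * σ A i := by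
  rw [atomicPart, tsum_eq_single i fun j hji => ?_, hσ.inter_cell h𝒜 hA (hHmem i)]
  rw [hσ.eq_zero_of_disjoint h𝒜 (h𝒜.inter_mem hA (hHmem i))
    ((hHd hji).symm.mono_left inter_subset_right), mul_zero]

include h𝒜 hHd h𝒜L hπ hσ in
theorem atomicPart_le (hsubL : 𝒜L ⊆ 𝒜) {B : Set Ω} (hB : B ∈ 𝒜L) :
    atomicPart H π σ B ≤ π B := by
  refine (summable_atomicPart hHd h𝒜L hπ hσ (hsubL hB)).tsum_le_of_sum_le fun u => ?_
  simp only [pi_mul_strategy_eq h𝒜 hHd h𝒜L hsubL hπ hσ hB]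
  rw [← hπ.isFAMeasure.sum_biUnion h𝒜L.1 (fun i _ => h𝒜L.1.inter_mem (h𝒜L.2.1 i) hB)
    fun i j hij => (hHd hij).mono inter_subset_left inter_subset_left]
  exact hπ.isFAMeasure.mono h𝒜L.1 (h𝒜L.1.biUnion_mem fun i _ => h𝒜L.1.inter_mem (h𝒜L.2.1 i) hB)
    hB (iUnion₂_subset fun i _ => inter_subset_right)

end AtomicPart

theorem exists_disintegration (h𝒜 : IsSetField 𝒜) (hHd : Pairwise fun i j => Disjoint (H i) (H j))
    (h𝒜L : IsFieldOver H 𝒜L) (hsubL : 𝒜L ⊆ 𝒜) (hπ : IsFAP 𝒜L π) (hσ : IsStrategy 𝒜 H σ)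
    {K : Set Ω} (hK : K ∈ 𝒜) (hπK : ∀ B ∈ 𝒜L, B ⊆ K → π B = 0)
    (hσK : ∀ i, π (H i) * σ K i = 0) :
    ∃ μ, IsFAMeasure 𝒜 μ ∧ (∀ B ∈ 𝒜L, μ B = π B) ∧
      (∀ i, ∀ A ∈ 𝒜, μ (A ∩ H i) = π (H i) * σ A i) ∧ μ K = 0 := by
  have hHmem : ∀ i, H i ∈ 𝒜 := fun i => hsubL (h𝒜L.2.1 i)
  have hat := isFAMeasure_atomicPart hHd h𝒜L hπ hσ
  have hatH : ∀ i, atomicPart H π σ (H i) = π (H i) := fun i => by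
    simpa [(hσ i).1.2.1] using atomicPart_inter_cell h𝒜 hHd hσ hHmem h𝒜.1 i
  have hdiffuse : IsFAMeasure 𝒜L (π - atomicPart H π σ) :=
    ⟨fun B hB => sub_nonneg.2 (atomicPart_le h𝒜 hHd h𝒜L hπ hσ hsubL hB), fun A hA B hB hAB => by
      simp only [Pi.sub_apply, hπ.2.2 A hA B hB hAB, hat.union (hsubL hA) (hsubL hB) hAB]
      ring⟩
  obtain ⟨d, hd, hdπ, hdK⟩ := exists_extension_innerVal h𝒜 h𝒜L.1 hsubL hdiffuse hK
  have hdH : ∀ i, d (H i) = 0 := fun i => by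
    rw [hdπ _ (h𝒜L.2.1 i), Pi.sub_apply, hatH, sub_self]
  refine ⟨atomicPart H π σ + d, hat.add hd, fun B hB => ?_, fun i A hA => ?_, ?_⟩
  · rw [Pi.add_apply, hdπ B hB, Pi.sub_apply, add_sub_cancel]
  · rw [Pi.add_apply, atomicPart_inter_cell h𝒜 hHd hσ hHmem hA,
      hd.eq_zero_of_subset h𝒜 (h𝒜.inter_mem hA (hHmem i)) (hHmem i) inter_subset_right (hdH i),
      add_zero]
  · have hat0 : atomicPart H π σ K = 0 := by simp [atomicPart, hσK]
    have hd0 : innerVal 𝒜L (π - atomicPart H π σ) K ≤ 0 := innerVal_le h𝒜L.1 fun B hB hBK => by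
      simpa [hπK B hB hBK] using hat.nonneg (hsubL hB)
    rw [Pi.add_apply, hat0, hdK, zero_add]
    exact le_antisymm hd0 (innerVal_nonneg h𝒜L.1 hdiffuse K)

end Disintegration

section Witnesses

variable {ι : Type*} {𝒜 𝒜L : Set (Set Ω)} {H : ι → Set Ω} {π : Set Ω → ℝ}
  {σ : Set Ω → ι → ℝ} {Q : Set Ω → Set Ω → ℝ}

theorem overlay_mem_FCPSet (h𝒜 : IsSetField 𝒜) (h𝒜L : IsFieldOver H 𝒜L) (hπ : IsFAP 𝒜L π)
    {μ : Set Ω → ℝ} (hμ : IsFAMeasure 𝒜 μ) (hμπ : ∀ B ∈ 𝒜L, μ B = π B)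
    (hdis : ∀ i, ∀ A ∈ 𝒜, μ (A ∩ H i) = π (H i) * σ A i) (hQ : IsFCP 𝒜 Q)
    (hQσ : ∀ F ∈ 𝒜, ∀ j, Q F (H j) = σ F j) : overlay μ Q ∈ FCPSet 𝒜 𝒜L H π σ := by
  have hμ1 : μ univ = 1 := (hμπ _ h𝒜L.1.1).trans hπ.2.1
  refine ⟨isFCP_overlay h𝒜 hμ hQ, fun B hB => ?_, fun F hF j => ?_⟩
  · rw [overlay_of_pos (hμ1 ▸ one_pos) B, inter_univ, hμ1, div_one, hμπ B hB]
  · by_cases hpos : 0 < μ (H j)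
    · rw [overlay_of_pos hpos, hdis j F hF, hμπ _ (h𝒜L.2.1 j)]
      rw [hμπ _ (h𝒜L.2.1 j)] at hpos
      field_simp
    · rw [overlay_of_not_pos hpos, hQσ F hF j]

theorem exists_mem_FCPSet_cond_eq (h𝒜 : IsSetField 𝒜)
    (hHd : Pairwise fun i j => Disjoint (H i) (H j)) (h𝒜L : IsFieldOver H 𝒜L) (hsubL : 𝒜L ⊆ 𝒜)
    (hπ : IsFAP 𝒜L π) (hσ : IsStrategy 𝒜 H σ) {K : Set Ω} (hK : K ∈ 𝒜)
    (hπK : ∀ B ∈ 𝒜L, B ⊆ K → π B = 0) (hσK : ∀ i, π (H i) * σ K i = 0) (hQ : IsFCP 𝒜 Q)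
    (hQσ : ∀ F ∈ 𝒜, ∀ j, Q F (H j) = σ F j) :
    ∃ P ∈ FCPSet 𝒜 𝒜L H π σ, ∀ F, P F K = Q F K := by
  obtain ⟨μ, hμ, hμπ, hdis, hμK⟩ := exists_disintegration h𝒜 hHd h𝒜L hsubL hπ hσ hK hπK hσK
  exact ⟨overlay μ Q, overlay_mem_FCPSet h𝒜 h𝒜L hπ hμ hμπ hdis hQ hQσ,
    overlay_of_not_pos (hμK.symm ▸ lt_irrefl 0)⟩

theorem FCPSet_nonempty (h𝒜 : IsSetField 𝒜) (hHd : Pairwise fun i j => Disjoint (H i) (H j))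
    (h𝒜L : IsFieldOver H 𝒜L) (hsubL : 𝒜L ⊆ 𝒜) (hπ : IsFAP 𝒜L π) (hσ : IsStrategy 𝒜 H σ) :
    (FCPSet 𝒜 𝒜L H π σ).Nonempty := by
  obtain ⟨Q, hQ, hQσ⟩ := exists_isFCP_eq_strategy h𝒜 (fun i => hsubL (h𝒜L.2.1 i)) hHd hσ
  obtain ⟨P, hP, -⟩ := exists_mem_FCPSet_cond_eq h𝒜 hHd h𝒜L hsubL hπ hσ h𝒜.empty_mem
    (fun B _ hB => subset_empty_iff.1 hB ▸ hπ.isFAMeasure.empty h𝒜L.1)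
    (fun i => by rw [(hσ.isFAMeasure i).empty h𝒜, mul_zero]) hQ hQσ
  exact ⟨P, hP⟩

end Witnesses

section Cells

variable {ι : Type*} {𝒜 : Set (Set Ω)} {H : ι → Set Ω} {σ : Set Ω → ι → ℝ}
  {Q : Set Ω → Set Ω → ℝ} {F K : Set Ω}

theorem overlay_strategy_cell (h𝒜 : IsSetField 𝒜) (hHmem : ∀ i, H i ∈ 𝒜)
    (hHd : Pairwise fun i j => Disjoint (H i) (H j)) (hσ : IsStrategy 𝒜 H σ) (hF : F ∈ 𝒜)
    {i j : ι} (hQ : j ≠ i → Q F (H j) = σ F j) : overlay (σ · i) Q F (H j) = σ F j := by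
  by_cases hji : j = i
  · subst hji
    rw [overlay_of_pos (by simp [hσ.cell_self (hHmem j)]), hσ.inter_cell h𝒜 hF (hHmem j),
      hσ.cell_self (hHmem j), div_one]
  · rw [overlay_of_not_pos (by simp [hσ.eq_zero_of_disjoint h𝒜 (hHmem j) (hHd hji)]), hQ hji]

theorem overlay_ultrafilterMass_of_notMem {V : Ultrafilter Ω} (hK : K ∉ V) (F : Set Ω) :
    overlay (ultrafilterMass V) Q F K = Q F K :=
  overlay_of_not_pos (by simp [ultrafilterMass, hK]) F

theorem overlay_ultrafilterMass_eq_zero {V : Ultrafilter Ω} (hV : Fᶜ ∩ K ∈ V) :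
    overlay (ultrafilterMass V) Q F K = 0 := by
  have hK : K ∈ V := V.mem_of_superset hV inter_subset_right
  have hFK : F ∩ K ∉ V :=
    Ultrafilter.compl_mem_iff_notMem.1 (V.mem_of_superset hV fun _ hx hx' => hx.1 hx'.1)
  rw [overlay_of_pos (by simp [ultrafilterMass, hK])]
  simp [ultrafilterMass, hFK]

end Cells

section NullConditioning

variable {ι : Type*} {𝒜 𝒜L : Set (Set Ω)} {H : ι → Set Ω} {π : Set Ω → ℝ}
  {σ : Set Ω → ι → ℝ} {F K : Set Ω}

variable (h𝒜 : IsSetField 𝒜) (hHd : Pairwise fun i j => Disjoint (H i) (H j))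
  (h𝒜L : IsFieldOver H 𝒜L) (hsubL : 𝒜L ⊆ 𝒜) (hπ : IsFAP 𝒜L π) (hσ : IsStrategy 𝒜 H σ)
  (hK : K ∈ 𝒜) (hπK : ∀ B ∈ 𝒜L, B ⊆ K → π B = 0) (hσK : ∀ i, π (H i) * σ K i = 0)

include h𝒜 hHd h𝒜L hsubL hπ hσ hK hπK hσK

theorem exists_mem_FCPSet_cond_eq_div {i : ι} (hi : 0 < σ K i) :
    ∃ P ∈ FCPSet 𝒜 𝒜L H π σ, P F K = σ (F ∩ K) i / σ K i := by
  have hHmem : ∀ i, H i ∈ 𝒜 := fun i => hsubL (h𝒜L.2.1 i)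
  obtain ⟨Q₀, hQ₀, hQ₀σ⟩ := exists_isFCP_eq_strategy h𝒜 hHmem hHd hσ
  obtain ⟨P, hP, hPK⟩ := exists_mem_FCPSet_cond_eq h𝒜 hHd h𝒜L hsubL hπ hσ hK hπK hσK
    (isFCP_overlay h𝒜 (hσ.isFAMeasure i) hQ₀)
    fun F hF j => overlay_strategy_cell h𝒜 hHmem hHd hσ hF fun _ => hQ₀σ F hF j
  exact ⟨P, hP, (hPK F).trans (overlay_of_pos hi F)⟩

theorem exists_mem_FCPSet_cond_eq_zero (V : Ultrafilter Ω) (hV : Fᶜ ∩ K ∈ V)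
    (hVσ : ∀ j, H j ∈ V → σ K j = 0) : ∃ P ∈ FCPSet 𝒜 𝒜L H π σ, P F K = 0 := by
  have hHmem : ∀ i, H i ∈ 𝒜 := fun i => hsubL (h𝒜L.2.1 i)
  obtain ⟨Q₀, hQ₀, hQ₀σ⟩ := exists_isFCP_eq_strategy h𝒜 hHmem hHd hσ
  let QV := overlay (ultrafilterMass V) Q₀
  have hQV : IsFCP 𝒜 QV := isFCP_overlay h𝒜 (isFAMeasure_ultrafilterMass 𝒜 V) hQ₀
  have hQVσ : ∀ F ∈ 𝒜, ∀ j, H j ∉ V → QV F (H j) = σ F j := fun F hF j hj =>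
    (overlay_ultrafilterMass_of_notMem hj F).trans (hQ₀σ F hF j)
  by_cases hcell : ∃ j₀, H j₀ ∈ V
  · -- `V` charges the single cell `H j₀`, where `σ(·|H j₀)` has to be layered above it
    obtain ⟨j₀, hj₀⟩ := hcell
    have hnot : ∀ j, j ≠ j₀ → H j ∉ V := fun j hj h => by
      simpa [(hHd hj).inter_eq] using V.inter_mem h hj₀
    obtain ⟨P, hP, hPK⟩ := exists_mem_FCPSet_cond_eq h𝒜 hHd h𝒜L hsubL hπ hσ hK hπK hσK
      (isFCP_overlay h𝒜 (hσ.isFAMeasure j₀) hQV)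
      fun F hF j => overlay_strategy_cell h𝒜 hHmem hHd hσ hF fun hj => hQVσ F hF j (hnot j hj)
    refine ⟨P, hP, (hPK F).trans ?_⟩
    rw [overlay_of_not_pos (by simp [hVσ j₀ hj₀])]
    exact overlay_ultrafilterMass_eq_zero hV
  · simp only [not_exists] at hcell
    obtain ⟨P, hP, hPK⟩ := exists_mem_FCPSet_cond_eq h𝒜 hHd h𝒜L hsubL hπ hσ hK hπK hσK hQV
      fun F hF j => hQVσ F hF j (hcell j)
    exact ⟨P, hP, (hPK F).trans (overlay_ultrafilterMass_eq_zero hV)⟩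

end NullConditioning

section Envelope

variable {Ps : Set (Set Ω → Set Ω → ℝ)} {F K : Set Ω} {a : ℝ}

theorem le_lowEnv (hne : Ps.Nonempty) (h : ∀ P ∈ Ps, a ≤ P F K) : a ≤ lowEnv Ps F K :=
  le_csInf (hne.image _) (forall_mem_image.2 h)

theorem lowEnv_eq_of_forall_le (h : ∀ P ∈ Ps, a ≤ P F K) (hex : ∃ P ∈ Ps, P F K = a) :
    lowEnv Ps F K = a :=
  IsLeast.csInf_eq ⟨hex.imp fun _ hP => hP, forall_mem_image.2 h⟩

end Envelope

section LowerBound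

variable {ι : Type*} {𝒜 : Set (Set Ω)} {H : ι → Set Ω} {σ : Set Ω → ι → ℝ}
  {P : Set Ω → Set Ω → ℝ} {F K : Set Ω}

theorem cond_cell_inter_eq (h𝒜 : IsSetField 𝒜) (hHmem : ∀ i, H i ∈ 𝒜)
    (hσ : IsStrategy 𝒜 H σ) (hP : IsFCP 𝒜 P) (hPσ : ∀ F ∈ 𝒜, ∀ j, P F (H j) = σ F j)
    {A : Set Ω} (hA : A ∈ 𝒜) (hK : K ∈ 𝒜) (hKne : K.Nonempty) {i : ι} (hi : 0 < σ K i) :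
    P (H i ∩ A) K = P (H i) K * (σ (K ∩ A) i / σ K i) := by
  have hKi : (K ∩ H i).Nonempty := not_disjoint_iff_nonempty_inter.1 fun hd =>
    hi.ne' (hσ.eq_zero_of_disjoint h𝒜 hK hd)
  have hcell := hP.2.2 K hK A hA (H i) (hHmem i) (hKi.mono inter_subset_right) hKi
  rw [hPσ _ (h𝒜.inter_mem hK hA), hPσ K hK] at hcell
  rw [hP.2.2 (H i) (hHmem i) A hA K hK hKne (by rwa [inter_comm]), inter_comm (H i) K, hcell]
  field_simp

theorem le_cond_of_forall_le_div (h𝒜 : IsSetField 𝒜) (hHmem : ∀ i, H i ∈ 𝒜)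
    (hHd : Pairwise fun i j => Disjoint (H i) (H j)) (hσ : IsStrategy 𝒜 H σ) (hP : IsFCP 𝒜 P)
    (hPσ : ∀ F ∈ 𝒜, ∀ j, P F (H j) = σ F j) (hF : F ∈ 𝒜) (hK : K ∈ 𝒜) (hKne : K.Nonempty)
    {t : Finset ι} (hcover : Fᶜ ∩ K ⊆ ⋃ i ∈ t, H i) (hpos : ∀ i ∈ t, 0 < σ K i) {m : ℝ}
    (hm1 : m ≤ 1) (hm : ∀ i ∈ t, m ≤ σ (F ∩ K) i / σ K i) : m ≤ P F K := by
  have hPK := hP.2.1 K hK hKne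
  have hFc : Fᶜ ∈ 𝒜 := h𝒜.compl_mem hF
  have hterm : ∀ i ∈ t, P (H i ∩ Fᶜ) K ≤ P (H i) K * (1 - m) := fun i hi => by
    rw [cond_cell_inter_eq h𝒜 hHmem hσ hP hPσ hFc hK hKne (hpos i hi)]
    refine mul_le_mul_of_nonneg_left ?_ (hPK.1 _ (hHmem i)).1
    have hsplit := (hσ.isFAMeasure i).eq_inter_add_diff h𝒜 hF hK
    rw [inter_comm K F, sdiff_eq] at hsplit
    rw [show σ (K ∩ Fᶜ) i = σ K i - σ (F ∩ K) i by linarith, sub_div,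
      div_self (hpos i hi).ne']
    linarith [hm i hi]
  have hFcK : P Fᶜ K ≤ ∑ i ∈ t, P (H i ∩ Fᶜ) K := by
    rw [hP.1 _ hFc K hK hKne, ← hPK.isFAMeasure.sum_biUnion h𝒜
      (fun i _ => h𝒜.inter_mem (hHmem i) hFc)
      fun i j hij => (hHd hij).mono inter_subset_left inter_subset_left]
    refine hPK.isFAMeasure.mono h𝒜 (h𝒜.inter_mem hFc hK)
      (h𝒜.biUnion_mem fun i _ => h𝒜.inter_mem (hHmem i) hFc) fun x hx => ?_
    obtain ⟨i, hi, hxi⟩ := mem_iUnion₂.1 (hcover hx)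
    exact mem_iUnion₂.2 ⟨i, hi, hxi, hx.1⟩
  have hcells : ∑ i ∈ t, P (H i) K ≤ 1 := by
    rw [← hPK.isFAMeasure.sum_biUnion h𝒜 (fun i _ => hHmem i) hHd]
    exact (hPK.1 _ (h𝒜.biUnion_mem fun i _ => hHmem i)).2
  have hsum := Finset.sum_le_sum hterm
  rw [← Finset.sum_mul] at hsum
  have := mul_le_of_le_one_left (sub_nonneg.2 hm1) hcells
  linarith [hPK.compl h𝒜 hF]

end LowerBound

section Cases

variable {ι : Type*} {𝒜 𝒜L : Set (Set Ω)} {H : ι → Set Ω} {π : Set Ω → ℝ}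
  {σ : Set Ω → ι → ℝ} {F K : Set Ω}

theorem exists_ultrafilter_forall_cell_notMem (hHd : Pairwise fun i j => Disjoint (H i) (H j))
    {S : Set ι} (hS : S.Infinite) {T : Set Ω} (hT : ∀ i ∈ S, (H i ∩ T).Nonempty) :
    ∃ V : Ultrafilter Ω, T ∈ V ∧ ∀ j, H j ∉ V := by
  have := hS.to_subtype
  choose w hw using fun i : S => hT i i.2
  refine ⟨(Ultrafilter.of Filter.cofinite).map w,
    Ultrafilter.mem_map.2 (Filter.univ_mem' fun i => (hw i).2), fun j hj => ?_⟩
  have hfin : (w ⁻¹' H j).Finite := Subsingleton.finite fun a ha b hb => by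
    have hcell : ∀ c : S, w c ∈ H j → (c : ι) = j := fun c hc => by
      by_contra hne
      exact (hHd hne).le_bot ⟨(hw c).1, hc⟩
    exact Subtype.ext ((hcell a ha).trans (hcell b hb).symm)
  exact Ultrafilter.compl_mem_iff_notMem.1 (Ultrafilter.of_le _ hfin.compl_mem_cofinite) hj

/-- The index set `I₂` of the paper. -/
def splitCells (H : ι → Set Ω) (F K : Set Ω) : Set ι :=
  {i | (H i ∩ F ∩ K).Nonempty ∧ (H i ∩ Fᶜ ∩ K).Nonempty}

/-- The index set `I₃` of the paper. -/
def outsideCells (H : ι → Set Ω) (F K : Set Ω) : Set ι :=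
  {i | H i ∩ F ∩ K = ∅ ∧ (H i ∩ Fᶜ ∩ K).Nonempty}

theorem compl_inter_subset_biUnion_splitCells (hH : ⋃ i, H i = univ)
    (hI₃ : outsideCells H F K = ∅) : Fᶜ ∩ K ⊆ ⋃ i ∈ splitCells H F K, H i := by
  intro x hx
  obtain ⟨i, hxi⟩ := mem_iUnion.1 (hH.symm ▸ mem_univ x : x ∈ ⋃ i, H i)
  have hout : (H i ∩ Fᶜ ∩ K).Nonempty := ⟨x, ⟨hxi, hx.1⟩, hx.2⟩
  refine mem_biUnion ⟨nonempty_iff_ne_empty.2 fun hin => ?_, hout⟩ hxi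
  exact (hI₃ ▸ (⟨hin, hout⟩ : i ∈ outsideCells H F K) : i ∈ (∅ : Set ι))

theorem vanishing_cases (hH : ⋃ i, H i = univ) (hσK : ∀ i, 0 ≤ σ K i) (hFK : F ∩ K ≠ K)
    (h : ¬((splitCells H F K).Nonempty ∧ outsideCells H F K = ∅ ∧ (splitCells H F K).Finite ∧
      ∀ i ∈ splitCells H F K, 0 < σ K i)) :
    (∃ i, H i ∩ F ∩ K = ∅ ∧ 0 < σ K i) ∨ (∃ i, (H i ∩ Fᶜ ∩ K).Nonempty ∧ σ K i = 0) ∨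
      (splitCells H F K).Infinite := by
  by_contra! hall
  obtain ⟨hin, hout, hfin⟩ := hall
  have hpos : ∀ i, (H i ∩ Fᶜ ∩ K).Nonempty → 0 < σ K i := fun i hi =>
    (hσK i).lt_of_ne (hout i hi).symm
  have hI₃ : outsideCells H F K = ∅ :=
    eq_empty_of_forall_notMem fun i hi => (hin i hi.1).not_gt (hpos i hi.2)
  obtain ⟨x, hxK, hxF⟩ := not_subset.1 fun hKF => hFK (inter_eq_right.2 hKF)
  obtain ⟨i, hi, -⟩ := mem_iUnion₂.1 (compl_inter_subset_biUnion_splitCells hH hI₃ ⟨hxF, hxK⟩)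
  exact h ⟨⟨i, hi⟩, hI₃, hfin, fun i hi => hpos i hi.2⟩

end Cases

section Main

variable {ι : Type*} {𝒜 𝒜L : Set (Set Ω)} {H : ι → Set Ω} {π : Set Ω → ℝ}
  {σ : Set Ω → ι → ℝ} {F K : Set Ω}

theorem null_of_lowEnv_eq_zero (h𝒜 : IsSetField 𝒜) (hH : IsPartition H)
    (h𝒜L : IsFieldOver H 𝒜L) (hsubL : 𝒜L ⊆ 𝒜) (hπ : IsFAP 𝒜L π) (hσ : IsStrategy 𝒜 H σ)
    (hK : K ∈ 𝒜) (hKne : K.Nonempty) (hzero : lowEnv (FCPSet 𝒜 𝒜L H π σ) K univ = 0) :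
    (∀ B ∈ 𝒜L, B ⊆ K → π B = 0) ∧ ∀ i, π (H i) * σ K i = 0 := by
  have hne := FCPSet_nonempty h𝒜 hH.2.1 h𝒜L hsubL hπ hσ
  have hmono : ∀ P ∈ FCPSet 𝒜 𝒜L H π σ, ∀ A ∈ 𝒜, A ⊆ K → P A univ ≤ P K univ :=
    fun P hP A hA hAK =>
      (hP.1.2.1 univ h𝒜.1 (hKne.mono (subset_univ K))).isFAMeasure.mono h𝒜 hA hK hAK
  refine ⟨fun B hB hBK => le_antisymm ?_ (hπ.1 B hB).1, fun i => le_antisymm ?_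
    (mul_nonneg (hπ.1 _ (h𝒜L.2.1 i)).1 ((hσ i).1.1 K hK).1)⟩
  all_goals refine hzero ▸ le_lowEnv hne fun P hP => ?_
  · exact hP.2.1 B hB ▸ hmono P hP B (hsubL hB) hBK
  · have hchain := hP.1.2.2 (H i) (hsubL (h𝒜L.2.1 i)) K hK univ h𝒜.1
      ((hH.1 i).mono (subset_univ _)) (by simpa using hH.1 i)
    rw [inter_univ, hP.2.1 _ (h𝒜L.2.1 i), hP.2.2 K hK i] at hchain
    exact hchain ▸ hmono P hP _ (h𝒜.inter_mem (hsubL (h𝒜L.2.1 i)) hK) inter_subset_right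

theorem lowEnv_eq_sInf_div (h𝒜 : IsSetField 𝒜) (hH : IsPartition H)
    (h𝒜L : IsFieldOver H 𝒜L) (hsubL : 𝒜L ⊆ 𝒜) (hπ : IsFAP 𝒜L π) (hσ : IsStrategy 𝒜 H σ)
    (hF : F ∈ 𝒜) (hK : K ∈ 𝒜) (hKne : K.Nonempty) (hπK : ∀ B ∈ 𝒜L, B ⊆ K → π B = 0)
    (hσK : ∀ i, π (H i) * σ K i = 0) (hI₂ : (splitCells H F K).Nonempty)
    (hI₃ : outsideCells H F K = ∅) (hfin : (splitCells H F K).Finite)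
    (hpos : ∀ i ∈ splitCells H F K, 0 < σ K i) :
    lowEnv (FCPSet 𝒜 𝒜L H π σ) F K =
      sInf ((fun i => σ (F ∩ K) i / σ K i) '' splitCells H F K) := by
  have hHmem : ∀ i, H i ∈ 𝒜 := fun i => hsubL (h𝒜L.2.1 i)
  obtain ⟨i₀, hi₀, hmin⟩ := (hI₂.image fun i => σ (F ∩ K) i / σ K i).csInf_mem (hfin.image _)
  rw [← hmin]
  refine lowEnv_eq_of_forall_le (fun P hP => ?_)
    (exists_mem_FCPSet_cond_eq_div h𝒜 hH.2.1 h𝒜L hsubL hπ hσ hK hπK hσK (hpos i₀ hi₀))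
  refine le_cond_of_forall_le_div h𝒜 hHmem hH.2.1 hσ hP.1 hP.2.2 hF hK hKne (t := hfin.toFinset)
    (by simpa using compl_inter_subset_biUnion_splitCells hH.2.2 hI₃)
    (fun i hi => hpos i (hfin.mem_toFinset.1 hi)) ?_ fun i hi => ?_
  · exact div_le_one_of_le₀ ((hσ.isFAMeasure i₀).mono h𝒜 (h𝒜.inter_mem hF hK) hK
      inter_subset_right) (hpos i₀ hi₀).le
  · exact hmin ▸ csInf_le (hfin.image _).bddBelow (mem_image_of_mem _ (hfin.mem_toFinset.1 hi))

theorem lowEnv_eq_zero (h𝒜 : IsSetField 𝒜) (hH : IsPartition H)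
    (h𝒜L : IsFieldOver H 𝒜L) (hsubL : 𝒜L ⊆ 𝒜) (hπ : IsFAP 𝒜L π) (hσ : IsStrategy 𝒜 H σ)
    (hF : F ∈ 𝒜) (hK : K ∈ 𝒜) (hKne : K.Nonempty) (hFK : F ∩ K ≠ K)
    (hπK : ∀ B ∈ 𝒜L, B ⊆ K → π B = 0) (hσK : ∀ i, π (H i) * σ K i = 0)
    (h : ¬((splitCells H F K).Nonempty ∧ outsideCells H F K = ∅ ∧ (splitCells H F K).Finite ∧
      ∀ i ∈ splitCells H F K, 0 < σ K i)) :
    lowEnv (FCPSet 𝒜 𝒜L H π σ) F K = 0 := by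
  refine lowEnv_eq_of_forall_le (fun P hP => ((hP.1.2.1 K hK hKne).1 F hF).1) ?_
  rcases vanishing_cases hH.2.2 (fun i => ((hσ i).1.1 K hK).1) hFK h with
    ⟨i, hi, hσi⟩ | ⟨i, ⟨y, hy⟩, hσi⟩ | hinf
  · obtain ⟨P, hP, hPK⟩ := exists_mem_FCPSet_cond_eq_div (F := F) h𝒜 hH.2.1 h𝒜L hsubL hπ hσ hK
      hπK hσK hσi
    refine ⟨P, hP, ?_⟩
    rw [hPK, hσ.eq_zero_of_disjoint h𝒜 (h𝒜.inter_mem hF hK) ?_, zero_div]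
    rw [disjoint_iff_inter_eq_empty, ← hi]
    ac_rfl
  · refine exists_mem_FCPSet_cond_eq_zero h𝒜 hH.2.1 h𝒜L hsubL hπ hσ hK hπK hσK (pure y)
      (Ultrafilter.mem_pure.2 ⟨hy.1.2, hy.2⟩) fun j hj => ?_
    rwa [← (not_ne_iff.1 fun hji => (hH.2.1 hji).le_bot ⟨Ultrafilter.mem_pure.1 hj, hy.1.1⟩)] at hσi
  · obtain ⟨V, hV, hVH⟩ := exists_ultrafilter_forall_cell_notMem hH.2.1 hinf (T := Fᶜ ∩ K)
      fun i hi => by simpa only [inter_assoc] using hi.2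
    exact exists_mem_FCPSet_cond_eq_zero h𝒜 hH.2.1 h𝒜L hsubL hπ hσ hK hπK hσK V hV
      fun j hj => absurd hj (hVH j)

end Main

theorem statement4_general {Ω ι κ : Type*} (H : ι → Set Ω) (E : κ → Set Ω)
    (𝒜L 𝒜E 𝒜 : Set (Set Ω))
    (hH : IsPartition H)
    (h𝒜L : IsFieldOver H 𝒜L)
    (h𝒜 : IsJointField H E 𝒜L 𝒜E 𝒜)
    (π : Set Ω → ℝ) (hπ : IsFAP 𝒜L π)
    (σ : Set Ω → ι → ℝ) (hσ : IsStrategy 𝒜 H σ)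
    (F K : Set Ω) (hF : F ∈ 𝒜) (hK : K ∈ 𝒜) (hKne : K.Nonempty)
    (hFK : F ∩ K ≠ K)
    (hzero : lowEnv (FCPSet 𝒜 𝒜L H π σ) K Set.univ = 0) :
    (({i | (H i ∩ F ∩ K).Nonempty ∧ (H i ∩ Fᶜ ∩ K).Nonempty}.Nonempty ∧
      {i | H i ∩ F ∩ K = ∅ ∧ (H i ∩ Fᶜ ∩ K).Nonempty} = ∅ ∧
      {i | (H i ∩ F ∩ K).Nonempty ∧ (H i ∩ Fᶜ ∩ K).Nonempty}.Finite ∧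
      ∀ i ∈ {i | (H i ∩ F ∩ K).Nonempty ∧ (H i ∩ Fᶜ ∩ K).Nonempty}, 0 < σ K i) →
      lowEnv (FCPSet 𝒜 𝒜L H π σ) F K =
        sInf ((fun i => σ (F ∩ K) i / σ K i) ''
          {i | (H i ∩ F ∩ K).Nonempty ∧ (H i ∩ Fᶜ ∩ K).Nonempty})) ∧
    (¬({i | (H i ∩ F ∩ K).Nonempty ∧ (H i ∩ Fᶜ ∩ K).Nonempty}.Nonempty ∧
      {i | H i ∩ F ∩ K = ∅ ∧ (H i ∩ Fᶜ ∩ K).Nonempty} = ∅ ∧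
      {i | (H i ∩ F ∩ K).Nonempty ∧ (H i ∩ Fᶜ ∩ K).Nonempty}.Finite ∧
      ∀ i ∈ {i | (H i ∩ F ∩ K).Nonempty ∧ (H i ∩ Fᶜ ∩ K).Nonempty}, 0 < σ K i) →
      lowEnv (FCPSet 𝒜 𝒜L H π σ) F K = 0) := by
  obtain ⟨h𝒜f, hsubL, -, -⟩ := h𝒜
  obtain ⟨hπK, hσK⟩ := null_of_lowEnv_eq_zero h𝒜f hH h𝒜L hsubL hπ hσ hK hKne hzero
  exact ⟨fun ⟨hI₂, hI₃, hfin, hpos⟩ => lowEnv_eq_sInf_div h𝒜f hH h𝒜L hsubL hπ hσ hF hK hKne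
      hπK hσK hI₂ hI₃ hfin hpos,
    lowEnv_eq_zero h𝒜f hH h𝒜L hsubL hπ hσ hF hK hKne hFK hπK hσK⟩

/-- closed form of `P_*(F|K)` when `P^j_*(K) = 0`. -/
theorem statement4 {Ω ι κ : Type*} [Nonempty Ω] (H : ι → Set Ω) (E : κ → Set Ω)
    (𝒜L 𝒜E 𝒜 : Set (Set Ω))
    (hH : IsPartition H) (hE : IsPartition E)
    (h𝒜L : IsFieldOver H 𝒜L) (h𝒜E : IsFieldOver E 𝒜E)
    (h𝒜 : IsJointField H E 𝒜L 𝒜E 𝒜)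
    (π : Set Ω → ℝ) (hπ : IsFAP 𝒜L π)
    (σ : Set Ω → ι → ℝ) (hσ : IsStrategy 𝒜 H σ)
    (F K : Set Ω) (hF : F ∈ 𝒜) (hK : K ∈ 𝒜) (hKne : K.Nonempty)
    (hFK : F ∩ K ≠ K)
    (hzero : lowEnv (FCPSet 𝒜 𝒜L H π σ) K Set.univ = 0) :
    (({i | (H i ∩ F ∩ K).Nonempty ∧ (H i ∩ Fᶜ ∩ K).Nonempty}.Nonempty ∧
      {i | H i ∩ F ∩ K = ∅ ∧ (H i ∩ Fᶜ ∩ K).Nonempty} = ∅ ∧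
      {i | (H i ∩ F ∩ K).Nonempty ∧ (H i ∩ Fᶜ ∩ K).Nonempty}.Finite ∧
      ∀ i ∈ {i | (H i ∩ F ∩ K).Nonempty ∧ (H i ∩ Fᶜ ∩ K).Nonempty}, 0 < σ K i) →
      lowEnv (FCPSet 𝒜 𝒜L H π σ) F K =
        sInf ((fun i => σ (F ∩ K) i / σ K i) ''
          {i | (H i ∩ F ∩ K).Nonempty ∧ (H i ∩ Fᶜ ∩ K).Nonempty})) ∧
    (¬({i | (H i ∩ F ∩ K).Nonempty ∧ (H i ∩ Fᶜ ∩ K).Nonempty}.Nonempty ∧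
      {i | H i ∩ F ∩ K = ∅ ∧ (H i ∩ Fᶜ ∩ K).Nonempty} = ∅ ∧
      {i | (H i ∩ F ∩ K).Nonempty ∧ (H i ∩ Fᶜ ∩ K).Nonempty}.Finite ∧
      ∀ i ∈ {i | (H i ∩ F ∩ K).Nonempty ∧ (H i ∩ Fᶜ ∩ K).Nonempty}, 0 < σ K i) →
      lowEnv (FCPSet 𝒜 𝒜L H π σ) F K = 0) :=
  statement4_general H E 𝒜L 𝒜E 𝒜 hH h𝒜L h𝒜 π hπ σ hσ F K hF hK hKne hFK hzero
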